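/- arXiv:1904.02447 — 4 statements merged into one kernel-verified Lean document; each statement's English description precedes it below -/
import Mathlib

section
/- (Monotonicity of f_{T,σ²} with respect to the transmission window.) Assume O_{T₁} is positive definite (the pair (A,C) is observable over [0,T₁]). Then for every T₁ > 0, every positive integer h, T₂ := h·T₁, and every positive semidefinite Σ ∈ ℝ^{m×m}, it holds that f_{T₂,σ²}(Σ) ≥ f_{T₁,σ²}(Σ). -/
open Matrix MeasureTheory
open scoped Matrix

attribute [local instance] Matrix.frobeniusNormedAddCommGroup Matrix.frobeniusNormedSpace

noncomputable section

/-- `A` is Hurwitz stable: every complex eigenvalue of `A` has negative real part. -/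
def IsHurwitz {n : ℕ} (A : Matrix (Fin n) (Fin n) ℝ) : Prop :=
  ∀ μ ∈ spectrum ℂ (A.map (algebraMap ℝ ℂ)), μ.re < 0

/-- Observability Gramian `O_T = ∫₀^T exp(Aᵀt) CᵀC exp(At) dt`. -/
def obsGram {n p : ℕ} (A : Matrix (Fin n) (Fin n) ℝ) (C : Matrix (Fin p) (Fin n) ℝ)
    (T : ℝ) : Matrix (Fin n) (Fin n) ℝ :=
  ∫ t in (0:ℝ)..T,
    NormedSpace.exp (t • Aᵀ) * (Cᵀ * C) * NormedSpace.exp (t • A)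

/-- Infinite-horizon controllability Gramian
`W_T(Σ) = Σ_{k=0}^∞ exp(AkT) BΣBᵀ exp(AᵀkT)` of the sampled pair. -/
def ctrlGram {n m : ℕ} (A : Matrix (Fin n) (Fin n) ℝ) (B : Matrix (Fin n) (Fin m) ℝ)
    (T : ℝ) (S : Matrix (Fin m) (Fin m) ℝ) : Matrix (Fin n) (Fin n) ℝ :=
  ∑' k : ℕ, NormedSpace.exp (((k : ℝ) * T) • A) * (B * S * Bᵀ) *
    NormedSpace.exp (((k : ℝ) * T) • Aᵀ)

/-- The function
`f_{T,σ²}(Σ) = (1/2) log₂ ( det(σ²I + O_T W_T(Σ)) / det(σ²I + O_T (W_T(Σ) − BΣBᵀ)) )`. -/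
def infoFun {n m p : ℕ} (A : Matrix (Fin n) (Fin n) ℝ) (B : Matrix (Fin n) (Fin m) ℝ)
    (C : Matrix (Fin p) (Fin n) ℝ) (T σ2 : ℝ) (S : Matrix (Fin m) (Fin m) ℝ) : ℝ :=
  (1 / 2) * Real.logb 2
    ((σ2 • (1 : Matrix (Fin n) (Fin n) ℝ) + obsGram A C T * ctrlGram A B T S).det /
     (σ2 • (1 : Matrix (Fin n) (Fin n) ℝ) +
        obsGram A C T * (ctrlGram A B T S - B * S * Bᵀ)).det)

/-- The information capacity
`C_T(P,σ²) = sup { f_{T,σ²}(Σ) : Σ positive semidefinite, tr Σ = P }`. -/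
def capacity {n m p : ℕ} (A : Matrix (Fin n) (Fin n) ℝ) (B : Matrix (Fin n) (Fin m) ℝ)
    (C : Matrix (Fin p) (Fin n) ℝ) (T σ2 P : ℝ) : ℝ :=
  sSup {x : ℝ | ∃ S : Matrix (Fin m) (Fin m) ℝ,
    S.PosSemidef ∧ S.trace = P ∧ x = infoFun A B C T σ2 S}

/-- The information rate `R_T(P,σ²) = C_T(P,σ²)/T`. -/
def rate {n m p : ℕ} (A : Matrix (Fin n) (Fin n) ℝ) (B : Matrix (Fin n) (Fin m) ℝ)
    (C : Matrix (Fin p) (Fin n) ℝ) (T σ2 P : ℝ) : ℝ :=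
  capacity A B C T σ2 P / T

end

/-!
For observable `(A, C)`, factoring `O_T` out of both determinants gives
`f_{T,σ²}(Σ) = ½ log₂ (det (K_T + Q) / det K_T)` with `Q = BΣBᵀ` and `K_T = σ² O_T⁻¹ + W_T(Σ) - Q`.
Writing `Q = RᵀR`, the ratio is `det (1 + R K_T⁻¹ Rᵀ)`, which decreases as `K_T` increases in the
Loewner order. Passing from `T` to `hT` decreases `K`: `O_T` grows with `T` since its integrand is
positive semidefinite, so `σ² O_T⁻¹` shrinks, and `W_{hT}(Σ)` is the subseries of `W_T(Σ)` over
the indices divisible by `h`, whose terms are all positive semidefinite. The series converge because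
Hurwitz stability puts the spectrum of `exp (T A)` inside the open unit disc, so that by Gelfand's
formula `‖exp (T A) ^ k‖` decays geometrically.
-/

attribute [local instance] Matrix.frobeniusNormedRing Matrix.frobeniusNormedAlgebra

open NormedSpace Filter
open scoped NNReal MatrixOrder

section SpectralRadius

variable {𝔸 : Type*} [NormedRing 𝔸] [NormedAlgebra ℂ 𝔸] [CompleteSpace 𝔸]

lemma spectralRadius_lt_one_of_forall_norm_lt_one {a : 𝔸}
    (ha : ∀ z ∈ spectrum ℂ a, ‖z‖ < 1) : spectralRadius ℂ a < 1 := by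
  rcases (spectrum ℂ a).eq_empty_or_nonempty with h | h
  · simp [spectralRadius, h]
  · exact_mod_cast spectrum.spectralRadius_lt_of_forall_lt_of_nonempty h (r := 1) fun z hz => by
      exact_mod_cast ha z hz

lemma exists_nnnorm_pow_le_of_spectralRadius_lt_one {a : 𝔸} (ha : spectralRadius ℂ a < 1) :
    ∃ r : ℝ≥0, r < 1 ∧ ∀ᶠ k in atTop, ‖a ^ k‖₊ ≤ r ^ k := by
  obtain ⟨r, hρr, hr1⟩ := ENNReal.lt_iff_exists_nnreal_btwn.mp ha
  refine ⟨r, by exact_mod_cast hr1, ?_⟩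
  filter_upwards [(spectrum.pow_nnnorm_pow_one_div_tendsto_nhds_spectralRadius a).eventually
    (gt_mem_nhds hρr), eventually_gt_atTop 0] with k hk hk0
  rw [one_div] at hk
  have := (ENNReal.rpow_inv_le_iff (by positivity)).mp hk.le
  rw [ENNReal.rpow_natCast] at this
  exact_mod_cast this

end SpectralRadius

section MatrixExp

variable {ι : Type*} [Fintype ι] [DecidableEq ι]

lemma exp_mulVec_of_mulVec_eq_smul {M : Matrix ι ι ℂ} {μ : ℂ} {w : ι → ℂ}
    (h : M *ᵥ w = μ • w) : exp M *ᵥ w = Complex.exp μ • w := by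
  have hpow (n : ℕ) : M ^ n *ᵥ w = μ ^ n • w := by
    induction n with
    | zero => simp
    | succ n ih => rw [pow_succ', ← mulVec_mulVec, ih, mulVec_smul, h, smul_smul, pow_succ]
  have hM := (exp_series_hasSum_exp' (𝕂 := ℂ) M).map
    ((toLin' : Matrix ι ι ℂ ≃ₗ[ℂ] _).toLinearMap.flip w)
    (continuous_id.matrix_mulVec continuous_const)
  have hμ := (exp_series_hasSum_exp' (𝕂 := ℂ) μ).smul_const w
  rw [Complex.exp_eq_exp_ℂ]
  refine hM.unique (hμ.congr_fun fun n => ?_)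
  simp only [Function.comp_apply, LinearMap.flip_apply, LinearEquiv.coe_coe, toLin'_apply,
    smul_mulVec, hpow, smul_smul, smul_eq_mul]

/-- `exp (T • M)` commutes with `M`, so its eigenspace for `z` contains an eigenvector `w` of `M`,
say for `μ`; then `z • w = exp (T • M) *ᵥ w = exp (T * μ) • w`. -/
lemma norm_lt_one_of_mem_spectrum_exp_smul {M : Matrix ι ι ℂ}
    (hM : ∀ μ ∈ spectrum ℂ M, μ.re < 0) {T : ℝ} (hT : 0 < T) {z : ℂ}
    (hz : z ∈ spectrum ℂ (exp (T • M))) : ‖z‖ < 1 := by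
  set f := toLinAlgEquiv' M
  set g := toLinAlgEquiv' (exp (T • M))
  have hcomm : Commute g f := (((Commute.refl M).smul_left T).exp_left).map _
  have hV : Nontrivial (Module.End.eigenspace g z) := by
    rw [Submodule.nontrivial_iff_ne_bot, ← Module.End.hasEigenvalue_iff,
      Module.End.hasEigenvalue_iff_mem_spectrum, AlgEquiv.spectrum_eq]
    exact hz
  obtain ⟨μ, hμ⟩ :=
    Module.End.exists_eigenvalue (f.restrict (Module.End.mapsTo_genEigenspace_of_comm hcomm z 1))
  obtain ⟨⟨w, hwz⟩, hwμ⟩ := hμ.exists_hasEigenvector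
  have hw0 : w ≠ 0 := fun h => hwμ.2 (by simp [h])
  have hMw : M *ᵥ w = μ • w := congrArg Subtype.val hwμ.apply_eq_smul
  have hμM : μ ∈ spectrum ℂ M := by
    rw [← AlgEquiv.spectrum_eq toLinAlgEquiv', ← Module.End.hasEigenvalue_iff_mem_spectrum]
    exact Module.End.hasEigenvalue_of_hasEigenvector
      ⟨Module.End.mem_eigenspace_iff.mpr (by simpa [f] using hMw), hw0⟩
  have hEw : exp (T • M) *ᵥ w = z • w := by
    simpa [g] using Module.End.mem_eigenspace_iff.mp hwz
  have hz : z = Complex.exp (T * μ) := by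
    rw [exp_mulVec_of_mulVec_eq_smul (μ := T * μ)
      (by rw [smul_mulVec, hMw, mul_smul, Complex.coe_smul])] at hEw
    exact smul_left_injective ℂ hw0 hEw.symm
  rw [hz, Complex.norm_exp, Real.exp_lt_one_iff]
  simpa using mul_neg_of_pos_of_neg hT (hM μ hμM)

lemma exp_smul_transpose (A : Matrix ι ι ℝ) (c : ℝ) :
    exp (c • Aᵀ) = (exp (c • A))ᵀ := by
  rw [← transpose_smul, exp_transpose]

lemma exp_natCast_mul_smul (A : Matrix ι ι ℝ) (k : ℕ) (T : ℝ) :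
    exp (((k : ℝ) * T) • A) = exp (T • A) ^ k := by
  rw [mul_smul, Nat.cast_smul_eq_nsmul, Matrix.exp_nsmul]

lemma norm_map_ofReal (M : Matrix ι ι ℝ) : ‖M.map (algebraMap ℝ ℂ)‖ = ‖M‖ :=
  frobenius_norm_map_eq M _ fun a => Complex.norm_real a

lemma exp_map_ofReal (M : Matrix ι ι ℝ) :
    (exp M).map (algebraMap ℝ ℂ) = exp (M.map (algebraMap ℝ ℂ)) :=
  map_exp ((algebraMap ℝ ℂ).mapMatrix) (continuous_id.matrix_map Complex.continuous_ofReal) M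

end MatrixExp

section Hurwitz

variable {n : ℕ}

lemma IsHurwitz.exists_norm_pow_exp_smul_le {A : Matrix (Fin n) (Fin n) ℝ} (hA : IsHurwitz A)
    {T : ℝ} (hT : 0 < T) : ∃ r : ℝ≥0, r < 1 ∧ ∀ᶠ k in atTop, ‖exp (T • A) ^ k‖ ≤ r ^ k := by
  obtain ⟨r, hr1, hr⟩ := exists_nnnorm_pow_le_of_spectralRadius_lt_one
    (spectralRadius_lt_one_of_forall_norm_lt_one fun z hz =>
      norm_lt_one_of_mem_spectrum_exp_smul hA hT hz)
  refine ⟨r, hr1, hr.mono fun k hk => ?_⟩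
  have hmap : (T • A).map (algebraMap ℝ ℂ) = T • A.map (algebraMap ℝ ℂ) := by ext; simp
  rw [← norm_map_ofReal, Matrix.map_pow, exp_map_ofReal, hmap]
  exact_mod_cast hk

lemma IsHurwitz.summable_exp_mul_mul_exp {A : Matrix (Fin n) (Fin n) ℝ} (hA : IsHurwitz A)
    {T : ℝ} (hT : 0 < T) (Q : Matrix (Fin n) (Fin n) ℝ) :
    Summable fun k : ℕ => exp (((k : ℝ) * T) • A) * Q * exp (((k : ℝ) * T) • Aᵀ) := by
  obtain ⟨r, hr1, hr⟩ := hA.exists_norm_pow_exp_smul_le hT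
  have hr2 : (r : ℝ) ^ 2 < 1 := by simpa using hr1
  refine Summable.of_norm_bounded_eventually_nat
    ((summable_geometric_of_lt_one (by positivity) hr2).mul_left ‖Q‖) ?_
  filter_upwards [hr] with k hk
  rw [exp_smul_transpose, exp_natCast_mul_smul]
  calc ‖exp (T • A) ^ k * Q * (exp (T • A) ^ k)ᵀ‖
      ≤ ‖exp (T • A) ^ k‖ * ‖Q‖ * ‖exp (T • A) ^ k‖ := by
        grw [norm_mul_le, norm_mul_le, frobenius_norm_transpose]
    _ ≤ r ^ k * ‖Q‖ * r ^ k := by gcongr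
    _ = ‖Q‖ * ((r : ℝ) ^ 2) ^ k := by ring

end Hurwitz

namespace Matrix

variable {ι : Type*} {A B K₁ K₂ Q M : Matrix ι ι ℝ}

lemma PosDef.of_le (hA : A.PosDef) (hAB : A ≤ B) : B.PosDef := by
  simpa using hA.add_posSemidef hAB

variable [Fintype ι]

lemma isClosed_setOf_posSemidef : IsClosed {M : Matrix ι ι ℝ | M.PosSemidef} := by
  simp only [posSemidef_iff_dotProduct_mulVec, Set.ofPred_and, Set.ofPred_forall]
  refine (isClosed_eq continuous_id.matrix_conjTranspose continuous_id).inter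
    (isClosed_iInter fun x => isClosed_le continuous_const ?_)
  fun_prop

instance instOrderClosedTopology : OrderClosedTopology (Matrix ι ι ℝ) :=
  ⟨isClosed_le_of_isClosed_nonneg <| by
    simpa only [nonneg_iff_posSemidef] using isClosed_setOf_posSemidef⟩

variable [DecidableEq ι]

/-- With `X = A⁻¹ - B⁻¹`, `X = X A X + B⁻¹ (B - A) B⁻¹`, a sum of two conjugates of nonnegative
matrices. -/
lemma PosDef.inv_le_inv_of_le (hA : A.PosDef) (hAB : A ≤ B) : B⁻¹ ≤ A⁻¹ := by
  have hB := hA.of_le hAB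
  have hAu : IsUnit A.det := hA.det_pos.ne'.isUnit
  have hBu : IsUnit B.det := hB.det_pos.ne'.isUnit
  have key : A⁻¹ - B⁻¹ =
      star (A⁻¹ - B⁻¹) * A * (A⁻¹ - B⁻¹) + star B⁻¹ * (B - A) * B⁻¹ := by
    rw [(hA.inv.isHermitian.sub hB.inv.isHermitian).star_eq, hB.inv.isHermitian.star_eq]
    simp only [sub_mul, mul_sub, Matrix.mul_assoc, nonsing_inv_mul _ hAu, nonsing_inv_mul _ hBu,
      mul_nonsing_inv _ hAu, Matrix.mul_one, Matrix.one_mul]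
    abel
  rw [← sub_nonneg, key]
  exact add_nonneg (star_left_conjugate_nonneg hA.posSemidef.nonneg _)
    (star_left_conjugate_nonneg (sub_nonneg.2 hAB) _)

lemma one_le_det_one_add (hM : 0 ≤ M) : 1 ≤ (1 + M).det := by
  have hH : (1 + M).IsHermitian := (PosSemidef.one.add (nonneg_iff_posSemidef.mp hM)).isHermitian
  rw [hH.det_eq_prod_eigenvalues]
  refine Finset.one_le_prod fun i _ => ?_
  have hi := hH.eigenvalues_mem_spectrum_real i
  generalize hH.eigenvalues i = x at hi ⊢
  rw [← map_one (algebraMap ℝ (Matrix ι ι ℝ)), ← spectrum.singleton_add_eq] at hi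
  obtain ⟨_, rfl, μ, hμ, rfl⟩ := hi
  simpa using spectrum_nonneg_of_nonneg hM hμ

lemma det_add_star_mul_self (hK : IsUnit K₁.det) (R : Matrix ι ι ℝ) :
    (K₁ + star R * R).det = K₁.det * (1 + R * K₁⁻¹ * star R).det := by
  conv_lhs => rw [← mul_nonsing_inv_cancel_left (A := K₁) (star R * R) hK]
  rw [← mul_one_add, det_mul, ← Matrix.mul_assoc, det_one_add_mul_comm, Matrix.mul_assoc]

lemma PosDef.det_le_det_of_le (hA : A.PosDef) (hAB : A ≤ B) : A.det ≤ B.det := by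
  obtain ⟨R, hR⟩ := CStarAlgebra.nonneg_iff_eq_star_mul_self.mp (sub_nonneg.2 hAB)
  rw [← add_sub_cancel A B, hR, det_add_star_mul_self hA.det_pos.ne'.isUnit]
  exact le_mul_of_one_le_right hA.det_pos.le
    (one_le_det_one_add (star_right_conjugate_nonneg hA.inv.posSemidef.nonneg R))

lemma det_add_div_det_antitone (hK₂ : K₂.PosDef) (hK : K₂ ≤ K₁) (hQ : 0 ≤ Q) :
    (K₁ + Q).det / K₁.det ≤ (K₂ + Q).det / K₂.det := by
  have hK₁ := hK₂.of_le hK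
  obtain ⟨R, rfl⟩ := CStarAlgebra.nonneg_iff_eq_star_mul_self.mp hQ
  rw [det_add_star_mul_self hK₁.det_pos.ne'.isUnit, det_add_star_mul_self hK₂.det_pos.ne'.isUnit,
    mul_div_cancel_left₀ _ hK₁.det_pos.ne', mul_div_cancel_left₀ _ hK₂.det_pos.ne']
  refine PosDef.det_le_det_of_le ?_ ?_
  · exact PosDef.one.add_posSemidef
      (star_right_conjugate_nonneg hK₁.inv.posSemidef.nonneg R).posSemidef
  · exact add_le_add_right (star_right_conjugate_le_conjugate (hK₂.inv_le_inv_of_le hK) R) 1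

lemma det_smul_one_add_mul {O : Matrix ι ι ℝ} (hO : IsUnit O.det) (c : ℝ) (M : Matrix ι ι ℝ) :
    (c • (1 : Matrix ι ι ℝ) + O * M).det = O.det * (c • O⁻¹ + M).det := by
  rw [← det_mul, Matrix.mul_add, Matrix.mul_smul, mul_nonsing_inv _ hO]

end Matrix

section Gramians

variable {n m p : ℕ} (A : Matrix (Fin n) (Fin n) ℝ) (B : Matrix (Fin n) (Fin m) ℝ)
  (C : Matrix (Fin p) (Fin n) ℝ) (S : Matrix (Fin m) (Fin m) ℝ)

lemma obsGram_mono {T₁ T₂ : ℝ} (hT : T₁ ≤ T₂) : obsGram A C T₁ ≤ obsGram A C T₂ := by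
  have hcont : Continuous fun t : ℝ => exp (t • Aᵀ) * (Cᵀ * C) * exp (t • A) := by fun_prop
  have hnonneg (t : ℝ) : 0 ≤ exp (t • Aᵀ) * (Cᵀ * C) * exp (t • A) := by
    have h := (posSemidef_conjTranspose_mul_self (C * exp (t • A))).nonneg
    rw [conjTranspose_eq_transpose_of_trivial, transpose_mul, ← exp_smul_transpose] at h
    simpa only [Matrix.mul_assoc] using h
  -- the Frobenius norm induces the product topology, but not up to instance unfolding
  have : @OrderClosedTopology (Matrix (Fin n) (Fin n) ℝ)
      NormedAddCommGroup.toMetricSpace.toUniformSpace.toTopologicalSpace _ :=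
    Matrix.instOrderClosedTopology
  rw [← sub_nonneg, obsGram, obsGram, intervalIntegral.integral_interval_sub_left
    (hcont.intervalIntegrable _ _) (hcont.intervalIntegrable _ _),
    intervalIntegral.integral_of_le hT]
  exact integral_nonneg hnonneg

variable {A}

lemma exp_mul_mul_exp_nonneg {Q : Matrix (Fin n) (Fin n) ℝ} (hQ : 0 ≤ Q) (c : ℝ) :
    0 ≤ exp (c • A) * Q * exp (c • Aᵀ) := by
  rw [exp_smul_transpose]
  exact star_right_conjugate_nonneg hQ _

variable {S}

lemma IsHurwitz.le_ctrlGram (hA : IsHurwitz A) {T : ℝ} (hT : 0 < T) (hS : S.PosSemidef) :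
    B * S * Bᵀ ≤ ctrlGram A B T S := by
  have hQ : 0 ≤ B * S * Bᵀ := (hS.mul_mul_conjTranspose_same B).nonneg
  have h0 := (hA.summable_exp_mul_mul_exp hT _).le_tsum 0 fun k _ => exp_mul_mul_exp_nonneg hQ _
  rw [ctrlGram]
  simpa using h0

lemma IsHurwitz.ctrlGram_natCast_mul_le (hA : IsHurwitz A) {T : ℝ} (hT : 0 < T) {h : ℕ}
    (hh : 0 < h) (hS : S.PosSemidef) : ctrlGram A B (h * T) S ≤ ctrlGram A B T S := by
  have hQ : 0 ≤ B * S * Bᵀ := (hS.mul_mul_conjTranspose_same B).nonneg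
  have hsub := hA.summable_exp_mul_mul_exp (mul_pos (Nat.cast_pos.2 hh) hT) (B * S * Bᵀ)
  refine hsub.tsum_le_tsum_of_inj (h * ·) (mul_right_injective₀ hh.ne')
    (fun k _ => exp_mul_mul_exp_nonneg hQ _) (fun k => le_of_eq ?_)
    (hA.summable_exp_mul_mul_exp hT _)
  simp only [Nat.cast_mul, mul_assoc, mul_left_comm (k : ℝ)]

end Gramians

section InfoKernel

variable {n m p : ℕ} {A : Matrix (Fin n) (Fin n) ℝ} {B : Matrix (Fin n) (Fin m) ℝ}
  {C : Matrix (Fin p) (Fin n) ℝ} {S : Matrix (Fin m) (Fin m) ℝ} {σ2 : ℝ}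

noncomputable def infoKernel (A : Matrix (Fin n) (Fin n) ℝ) (B : Matrix (Fin n) (Fin m) ℝ)
    (C : Matrix (Fin p) (Fin n) ℝ) (T σ2 : ℝ) (S : Matrix (Fin m) (Fin m) ℝ) :
    Matrix (Fin n) (Fin n) ℝ :=
  σ2 • (obsGram A C T)⁻¹ + (ctrlGram A B T S - B * S * Bᵀ)

lemma infoFun_eq_logb_det_div {T : ℝ} (hO : (obsGram A C T).PosDef) :
    infoFun A B C T σ2 S = 1 / 2 * Real.logb 2
      ((infoKernel A B C T σ2 S + B * S * Bᵀ).det / (infoKernel A B C T σ2 S).det) := by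
  have hOu : IsUnit (obsGram A C T).det := hO.det_pos.ne'.isUnit
  rw [infoFun, det_smul_one_add_mul hOu, det_smul_one_add_mul hOu,
    mul_div_mul_left _ _ hO.det_pos.ne', infoKernel, add_assoc, sub_add_cancel]

lemma IsHurwitz.infoKernel_posDef (hA : IsHurwitz A) {T : ℝ} (hT : 0 < T)
    (hO : (obsGram A C T).PosDef) (hσ : 0 < σ2) (hS : S.PosSemidef) :
    (infoKernel A B C T σ2 S).PosDef :=
  (hO.inv.smul hσ).add_posSemidef (sub_nonneg.2 (hA.le_ctrlGram B hT hS)).posSemidef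

lemma IsHurwitz.infoKernel_natCast_mul_le (hA : IsHurwitz A) {T : ℝ} (hT : 0 < T) {h : ℕ}
    (hh : 0 < h) (hO : (obsGram A C T).PosDef) (hσ : 0 < σ2) (hS : S.PosSemidef) :
    infoKernel A B C (h * T) σ2 S ≤ infoKernel A B C T σ2 S := by
  have hT₁₂ : T ≤ h * T := le_mul_of_one_le_left hT.le (Nat.one_le_cast.2 hh)
  have hO_inv := hO.inv_le_inv_of_le (obsGram_mono A C hT₁₂)
  exact add_le_add (smul_le_smul_of_nonneg_left hO_inv hσ.le)
    (sub_le_sub_right (hA.ctrlGram_natCast_mul_le B hT hh hS) _)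

end InfoKernel

/-- Monotonicity of `f_{T,σ²}` w.r.t. the transmission window: if `(A,C)` is
observable over `[0,T₁]`, `T₂ = h·T₁` with `h` a positive integer, then
`f_{T₂,σ²}(Σ) ≥ f_{T₁,σ²}(Σ)`. -/
theorem stmt5 {n m p : ℕ} (A : Matrix (Fin n) (Fin n) ℝ) (B : Matrix (Fin n) (Fin m) ℝ)
    (C : Matrix (Fin p) (Fin n) ℝ) (hA : IsHurwitz A) (σ2 : ℝ) (hσ : 0 < σ2)
    (T₁ : ℝ) (hT₁ : 0 < T₁) (h : ℕ) (hh : 0 < h)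
    (hobs : (obsGram A C T₁).PosDef)
    (S : Matrix (Fin m) (Fin m) ℝ) (hS : S.PosSemidef) :
    infoFun A B C T₁ σ2 S ≤ infoFun A B C ((h : ℝ) * T₁) σ2 S := by
  have hT₂ : 0 < (h : ℝ) * T₁ := mul_pos (Nat.cast_pos.2 hh) hT₁
  have hobs₂ : (obsGram A C (h * T₁)).PosDef :=
    hobs.of_le (obsGram_mono A C (le_mul_of_one_le_left hT₁.le (Nat.one_le_cast.2 hh)))
  have hK₁ := hA.infoKernel_posDef (B := B) hT₁ hobs hσ hS
  have hK₂ := hA.infoKernel_posDef (B := B) hT₂ hobs₂ hσ hS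
  have hQ : 0 ≤ B * S * Bᵀ := (hS.mul_mul_conjTranspose_same B).nonneg
  have hpos := div_pos (hK₁.add_posSemidef hQ.posSemidef).det_pos hK₁.det_pos
  rw [infoFun_eq_logb_det_div hobs, infoFun_eq_logb_det_div hobs₂]
  refine mul_le_mul_of_nonneg_left (Real.logb_le_logb_of_le one_lt_two hpos ?_) (by norm_num)
  exact Matrix.det_add_div_det_antitone hK₂ (hA.infoKernel_natCast_mul_le hT₁ hh hobs hσ hS) hQ
end

section
/- For every fixed positive semidefinite Σ ∈ ℝ^{m×m} and fixed σ² > 0, as T → ∞ the value f_{T,σ²}(Σ) converges to (1/2)·log₂ det( I + (1/σ²)·O_∞·BΣBᵀ ), where O_∞ := ∫₀^∞ exp(Aᵀt) CᵀC exp(At) dt is the (finite, since A is Hurwitz) infinite-horizon observability Gramian. -/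
open Matrix MeasureTheory
open scoped Matrix

attribute [local instance] Matrix.frobeniusNormedAddCommGroup Matrix.frobeniusNormedSpace

/-!
The Hurwitz condition gives exponential decay of `exp (t • A)`: every eigenvalue of `exp A` is
`exp c` for an eigenvalue `c` of `A`, so the spectral radius of `exp A` is `< 1`, and Gelfand's
formula bounds `‖exp A ^ k‖` by `D * r ^ k` with `r < 1`. Hence `O_T → O_∞`, and
`W_T(Σ) → BΣBᵀ` because every term with `k ≥ 1` decays like `exp (-c k T)` (Tannery's theorem).
The numerator of `f_{T,σ²}(Σ)` thus tends to `det (σ² I + O_∞ BΣBᵀ)` and the denominator to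
`det (σ² I)`; their quotient `det (I + σ⁻² O_∞ BΣBᵀ)` is positive since `O_∞` and `BΣBᵀ` are
positive semidefinite, so `log₂` is continuous there.
-/

attribute [local instance] Matrix.frobeniusNormedRing Matrix.frobeniusNormedAlgebra

open NormedSpace Filter Topology
open scoped NNReal

-- The Frobenius norm induces the product topology on matrices only up to unfolding definitions,
-- so instance search does not find this instance by itself.
noncomputable local instance {ι : Type*} [Fintype ι] : ContinuousENorm (Matrix ι ι ℝ) :=
  SeminormedAddGroup.toContinuousENorm

namespace Matrix

variable {ι : Type*} [Fintype ι] [DecidableEq ι]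

theorem exp_mulVec_of_mulVec_eq_smul {M : Matrix ι ι ℂ} {c : ℂ} {w : ι → ℂ}
    (h : M *ᵥ w = c • w) : exp M *ᵥ w = Complex.exp c • w := by
  have hpow (k : ℕ) : M ^ k *ᵥ w = c ^ k • w := by
    induction k with
    | zero => simp
    | succ k ih => rw [pow_succ, ← mulVec_mulVec, h, mulVec_smul, ih, smul_smul, pow_succ']
  let evalAt : Matrix ι ι ℂ →L[ℂ] ι → ℂ :=
    (LinearMap.applyₗ w ∘ₗ Matrix.toLin'.toLinearMap).toContinuousLinearMap
  have hM := (exp_series_hasSum_exp' (𝕂 := ℂ) M).mapL evalAt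
  have hc := (exp_series_hasSum_exp' (𝕂 := ℂ) c).smul_const w
  rw [← Complex.exp_eq_exp_ℂ] at hc
  refine hM.unique (hc.congr_fun fun k => ?_)
  change ((k.factorial : ℂ)⁻¹ • M ^ k) *ᵥ w = _
  rw [smul_mulVec, hpow, smul_smul, smul_eq_mul]

theorem exists_exp_eq_of_mem_spectrum_exp {M : Matrix ι ι ℂ} {μ : ℂ}
    (hμ : μ ∈ spectrum ℂ (exp M)) : ∃ c ∈ spectrum ℂ M, Complex.exp c = μ := by
  rw [← spectrum_toLin', ← Module.End.hasEigenvalue_iff_mem_spectrum] at hμ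
  set W := Module.End.eigenspace (toLin' (exp M)) μ
  have hcomm : Commute (toLin' (exp M)) (toLin' M) :=
    ((Commute.refl M).exp_left).map toLinAlgEquiv'
  have hW : ∀ x ∈ W, toLin' M x ∈ W := fun x hx =>
    Module.End.mapsTo_genEigenspace_of_comm hcomm μ 1 hx
  have : Nontrivial W := Submodule.nontrivial_iff_ne_bot.2 hμ
  obtain ⟨c, hc⟩ := Module.End.exists_eigenvalue ((toLin' M).restrict hW)
  obtain ⟨w, hw⟩ := hc.exists_hasEigenvector
  have hMw : M *ᵥ (w : ι → ℂ) = c • (w : ι → ℂ) := congrArg Subtype.val hw.apply_eq_smul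
  have hw0 : (w : ι → ℂ) ≠ 0 := by simpa using hw.2
  refine ⟨c, ?_, smul_left_injective ℂ hw0 ?_⟩
  · rw [← spectrum_toLin', ← Module.End.hasEigenvalue_iff_mem_spectrum]
    exact Module.End.hasEigenvalue_of_hasEigenvector ⟨by simpa using hMw, hw0⟩
  · change Complex.exp c • (w : ι → ℂ) = μ • (w : ι → ℂ)
    rw [← exp_mulVec_of_mulVec_eq_smul hMw]
    simpa using (Module.End.mem_eigenspace_iff.1 w.2)

theorem norm_exp_map_ofReal_pow (A : Matrix ι ι ℝ) (k : ℕ) :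
    ‖exp (A.map (algebraMap ℝ ℂ)) ^ k‖ = ‖exp A ^ k‖ := by
  have hcont : Continuous ((algebraMap ℝ ℂ).mapMatrix : Matrix ι ι ℝ →+* Matrix ι ι ℂ) :=
    continuous_id.matrix_map Complex.continuous_ofReal
  have hexp : (algebraMap ℝ ℂ).mapMatrix (exp A) = exp (A.map (algebraMap ℝ ℂ)) :=
    map_exp _ hcont A
  rw [← hexp, ← map_pow, RingHom.mapMatrix_apply,
    frobenius_norm_map_eq _ (algebraMap ℝ ℂ) fun x => Complex.norm_real x]

end Matrix
theorem exists_norm_pow_le_of_spectralRadius_lt {𝔸 : Type*} [NormedRing 𝔸] [NormedAlgebra ℂ 𝔸]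
    [CompleteSpace 𝔸] (a : 𝔸) {r : ℝ≥0} (hr : spectralRadius ℂ a < r) :
    ∃ D : ℝ, ∀ k : ℕ, ‖a ^ k‖ ≤ D * r ^ k := by
  have hr0 : 0 < r := ENNReal.coe_pos.1 (zero_le.trans_lt hr)
  have hev : ∀ᶠ k : ℕ in atTop, ‖a ^ k‖ ≤ ‖(r : ℝ) ^ k‖ := by
    have gelfand := spectrum.pow_nnnorm_pow_one_div_tendsto_nhds_spectralRadius a
    filter_upwards [gelfand.eventually_lt_const hr, eventually_gt_atTop 0] with k hk hk0
    rw [← ENNReal.coe_rpow_of_nonneg _ (by positivity), ENNReal.coe_lt_coe, one_div,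
      NNReal.rpow_inv_lt_iff (by positivity), NNReal.rpow_natCast] at hk
    rw [Real.norm_of_nonneg (by positivity)]
    exact_mod_cast hk.le
  obtain ⟨D, hD⟩ := (Asymptotics.isBigO_nat_atTop_iff fun k hk =>
    absurd hk (pow_ne_zero k (NNReal.coe_ne_zero.2 hr0.ne'))).1 (Asymptotics.IsBigO.of_bound' hev)
  refine ⟨D, fun k => ?_⟩
  simpa [Real.norm_of_nonneg r.2] using hD k

theorem exists_norm_exp_smul_le_of_norm_exp_pow_le {𝔸 : Type*} [NormedRing 𝔸] [NormedAlgebra ℝ 𝔸]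
    [NormedAlgebra ℚ 𝔸] [CompleteSpace 𝔸] (a : 𝔸) {D r : ℝ} (hr0 : 0 < r) (hr1 : r < 1)
    (h : ∀ k : ℕ, ‖exp a ^ k‖ ≤ D * r ^ k) :
    ∃ M c : ℝ, 0 < c ∧ ∀ t, 0 ≤ t → ‖exp (t • a)‖ ≤ M * Real.exp (-c * t) := by
  obtain ⟨E, hE⟩ := isCompact_Icc.exists_bound_of_continuousOn
    ((exp_continuous.comp (continuous_id.smul continuous_const)).continuousOn :
      ContinuousOn (fun s : ℝ => exp (s • a)) (Set.Icc 0 1))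
  have hE0 : 0 ≤ E := (norm_nonneg _).trans (hE 0 ⟨le_rfl, zero_le_one⟩)
  have hD0 : 0 ≤ D := by simpa using (norm_nonneg _).trans (h 0)
  set c := -Real.log r with hc_def
  have hc : 0 < c := neg_pos.2 (Real.log_neg hr0 hr1)
  refine ⟨D * Real.exp c * E, c, hc, fun t ht => ?_⟩
  set k := ⌊t⌋₊
  have hkt : t < k + 1 := Nat.lt_floor_add_one t
  have hsplit : exp (t • a) = exp a ^ k * exp ((t - k) • a) := by
    rw [← NormedSpace.exp_nsmul, ← Nat.cast_smul_eq_nsmul ℝ, ← NormedSpace.exp_add_of_commute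
      (((Commute.refl a).smul_left _).smul_right _), ← add_smul, add_sub_cancel]
  have hrk : r ^ k ≤ Real.exp c * Real.exp (-c * t) := by
    rw [← Real.exp_log hr0, ← Real.exp_nat_mul, ← Real.exp_add, Real.exp_le_exp, hc_def]
    nlinarith [mul_pos hc (by linarith : (0 : ℝ) < k + 1 - t)]
  calc ‖exp (t • a)‖ ≤ ‖exp a ^ k‖ * ‖exp ((t - k) • a)‖ := hsplit ▸ norm_mul_le _ _
    _ ≤ (D * r ^ k) * E :=
        mul_le_mul (h k) (hE _ ⟨sub_nonneg.2 (Nat.floor_le ht), by linarith⟩) (norm_nonneg _)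
          ((norm_nonneg _).trans (h k))
    _ ≤ (D * (Real.exp c * Real.exp (-c * t))) * E := by gcongr
    _ = D * Real.exp c * E * Real.exp (-c * t) := by ring

theorem IsHurwitz.spectralRadius_exp_lt_one {n : ℕ} {A : Matrix (Fin n) (Fin n) ℝ}
    (hA : IsHurwitz A) : spectralRadius ℂ (exp (A.map (algebraMap ℝ ℂ))) < 1 := by
  rcases (spectrum ℂ (exp (A.map (algebraMap ℝ ℂ)))).eq_empty_or_nonempty with h | h
  · rw [spectralRadius, h]
    simp
  rw [← ENNReal.coe_one]
  refine spectrum.spectralRadius_lt_of_forall_lt_of_nonempty h fun μ hμ => ?_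
  obtain ⟨c, hc, rfl⟩ := Matrix.exists_exp_eq_of_mem_spectrum_exp hμ
  rw [← NNReal.coe_lt_coe, coe_nnnorm, Complex.norm_exp, NNReal.coe_one, Real.exp_lt_one_iff]
  exact hA c hc

theorem IsHurwitz.exists_norm_exp_smul_le {n : ℕ} {A : Matrix (Fin n) (Fin n) ℝ}
    (hA : IsHurwitz A) :
    ∃ M c : ℝ, 0 < c ∧ ∀ t, 0 ≤ t → ‖exp (t • A)‖ ≤ M * Real.exp (-c * t) := by
  obtain ⟨r, hρr, hr1⟩ := ENNReal.lt_iff_exists_nnreal_btwn.1 hA.spectralRadius_exp_lt_one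
  obtain ⟨D, hD⟩ := exists_norm_pow_le_of_spectralRadius_lt _ hρr
  refine exists_norm_exp_smul_le_of_norm_exp_pow_le (D := D) A
    (ENNReal.coe_pos.1 (zero_le.trans_lt hρr)) (by exact_mod_cast hr1) fun k =>
      (Matrix.norm_exp_map_ofReal_pow A k).symm.trans_le (hD k)

namespace Matrix

variable {ι : Type*} [Fintype ι] [DecidableEq ι]

theorem norm_exp_smul_transpose (A : Matrix ι ι ℝ) (t : ℝ) : ‖exp (t • Aᵀ)‖ = ‖exp (t • A)‖ := by
  rw [← transpose_smul, exp_transpose, frobenius_norm_transpose]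

theorem norm_exp_mul_mul_exp_transpose_le (A X : Matrix ι ι ℝ) (t : ℝ) :
    ‖exp (t • A) * X * exp (t • Aᵀ)‖ ≤ ‖exp (t • A)‖ ^ 2 * ‖X‖ :=
  norm_mul₃_le.trans_eq (by rw [norm_exp_smul_transpose]; ring)

theorem norm_exp_transpose_mul_mul_exp_le (A X : Matrix ι ι ℝ) (t : ℝ) :
    ‖exp (t • Aᵀ) * X * exp (t • A)‖ ≤ ‖exp (t • A)‖ ^ 2 * ‖X‖ := by
  simpa [norm_exp_smul_transpose] using norm_exp_mul_mul_exp_transpose_le Aᵀ X t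

theorem posSemidef_exp_transpose_mul_mul_exp {κ : Type*} [Fintype κ] (A : Matrix ι ι ℝ)
    (C : Matrix κ ι ℝ) (t : ℝ) : (exp (t • Aᵀ) * (Cᵀ * C) * exp (t • A)).PosSemidef := by
  have h := posSemidef_conjTranspose_mul_self (C * exp (t • A))
  rwa [conjTranspose_eq_transpose_of_trivial, transpose_mul, ← exp_transpose, transpose_smul,
    ← Matrix.mul_assoc, Matrix.mul_assoc _ Cᵀ] at h

theorem det_one_add_mul_pos {P K : Matrix ι ι ℝ} (hP : P.PosSemidef) (hK : K.PosSemidef) :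
    0 < (1 + P * K).det := by
  open scoped MatrixOrder in
  obtain ⟨R, hRR, hR⟩ : ∃ R : Matrix ι ι ℝ, R * R = P ∧ Rᴴ = R :=
    ⟨CFC.sqrt P, CFC.sqrt_mul_sqrt_self P hP.nonneg, (CFC.sqrt_nonneg P).posSemidef.1⟩
  have hRKR : (R * K * R).PosSemidef := by
    have h := hK.mul_mul_conjTranspose_same R
    rwa [hR] at h
  rw [← hRR, Matrix.mul_assoc, det_one_add_mul_comm]
  exact (PosDef.one.add_posSemidef hRKR).det_pos

theorem det_smul_one_add_div_det_smul_one {K : Type*} [Field K] {σ : K} (hσ : σ ≠ 0)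
    (M : Matrix ι ι K) : (σ • 1 + M).det / (σ • (1 : Matrix ι ι K)).det = (1 + σ⁻¹ • M).det := by
  rw [show σ • 1 + M = σ • (1 + σ⁻¹ • M) by rw [smul_add, smul_smul, mul_inv_cancel₀ hσ, one_smul],
    det_smul, det_smul, det_one, mul_one, mul_div_cancel_left₀ _ (pow_ne_zero _ hσ)]

end Matrix

theorem Matrix.posSemidef_integral {ι α : Type*} [Fintype ι] [MeasurableSpace α] {μ : Measure α}
    {f : α → Matrix ι ι ℝ} (hf : ∀ a, (f a).PosSemidef) : (∫ a, f a ∂μ).PosSemidef := by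
  classical
  by_cases hint : Integrable f μ
  swap
  · rw [integral_undef hint]
    exact Matrix.PosSemidef.zero
  refine PosSemidef.of_dotProduct_mulVec_nonneg ?_ fun x => ?_
  · let transposeL : Matrix ι ι ℝ →L[ℝ] Matrix ι ι ℝ :=
      (transposeLinearEquiv ι ι ℝ ℝ).toLinearMap.toContinuousLinearMap
    rw [IsHermitian, conjTranspose_eq_transpose_of_trivial]
    calc (∫ a, f a ∂μ)ᵀ = ∫ a, (f a)ᵀ ∂μ := (transposeL.integral_comp_comm hint).symm
      _ = ∫ a, f a ∂μ := by simp_rw [← conjTranspose_eq_transpose_of_trivial, (hf _).1.eq]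
  · let quadL : Matrix ι ι ℝ →L[ℝ] ℝ :=
      (LinearMap.applyₗ (star x) ∘ₗ LinearMap.applyₗ x ∘ₗ
        (toLinearMap₂' ℝ : Matrix ι ι ℝ ≃ₗ[ℝ] _).toLinearMap).toContinuousLinearMap
    have hquad (M : Matrix ι ι ℝ) : quadL M = star x ⬝ᵥ M *ᵥ x := by
      simp [quadL, toLinearMap₂'_apply']
    rw [← hquad]
    calc 0 ≤ ∫ a, quadL (f a) ∂μ :=
          integral_nonneg fun a => (hquad _).trans_ge ((hf a).dotProduct_mulVec_nonneg x)
      _ = quadL (∫ a, f a ∂μ) := quadL.integral_comp_comm hint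

namespace IsHurwitz

variable {n : ℕ} {A : Matrix (Fin n) (Fin n) ℝ}

theorem exists_sq_norm_exp_smul_le (hA : IsHurwitz A) :
    ∃ M c : ℝ, 0 < c ∧ ∀ t, 0 ≤ t → ‖exp (t • A)‖ ^ 2 ≤ M * Real.exp (-c * t) := by
  obtain ⟨M, c, hc, h⟩ := hA.exists_norm_exp_smul_le
  refine ⟨M ^ 2, 2 * c, by positivity, fun t ht => ?_⟩
  calc ‖exp (t • A)‖ ^ 2 ≤ (M * Real.exp (-c * t)) ^ 2 := by gcongr; exact h t ht
    _ = M ^ 2 * Real.exp (-(2 * c) * t) := by rw [mul_pow, ← Real.exp_nat_mul]; ring_nf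

theorem integrableOn_exp_transpose_mul_mul_exp {p : ℕ} (hA : IsHurwitz A)
    (C : Matrix (Fin p) (Fin n) ℝ) :
    IntegrableOn (fun t : ℝ => exp (t • Aᵀ) * (Cᵀ * C) * exp (t • A)) (Set.Ioi 0) := by
  obtain ⟨M, c, hc, h⟩ := hA.exists_sq_norm_exp_smul_le
  refine ((exp_neg_integrableOn_Ioi 0 hc).const_mul (M * ‖Cᵀ * C‖)).mono'
    (Continuous.aestronglyMeasurable
      (by fun_prop : Continuous fun t : ℝ => exp (t • Aᵀ) * (Cᵀ * C) * exp (t • A))) ?_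
  filter_upwards [ae_restrict_mem measurableSet_Ioi] with t ht
  calc _ ≤ ‖exp (t • A)‖ ^ 2 * ‖Cᵀ * C‖ := Matrix.norm_exp_transpose_mul_mul_exp_le A _ t
    _ ≤ M * Real.exp (-c * t) * ‖Cᵀ * C‖ := by gcongr; exact h t (le_of_lt ht)
    _ = M * ‖Cᵀ * C‖ * Real.exp (-c * t) := by ring

theorem tendsto_obsGram {p : ℕ} (hA : IsHurwitz A) (C : Matrix (Fin p) (Fin n) ℝ) :
    Tendsto (obsGram A C) atTop
      (𝓝 (∫ t in Set.Ioi (0 : ℝ), exp (t • Aᵀ) * (Cᵀ * C) * exp (t • A))) :=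
  intervalIntegral_tendsto_integral_Ioi 0 (hA.integrableOn_exp_transpose_mul_mul_exp C)
    tendsto_id

theorem tendsto_ctrlGram {m : ℕ} (hA : IsHurwitz A) (B : Matrix (Fin n) (Fin m) ℝ)
    (S : Matrix (Fin m) (Fin m) ℝ) :
    Tendsto (fun T => ctrlGram A B T S) atTop (𝓝 (B * S * Bᵀ)) := by
  obtain ⟨M, c, hc, h⟩ := hA.exists_sq_norm_exp_smul_le
  have hM : 0 ≤ M := by simpa using (sq_nonneg _).trans (h 0 le_rfl)
  set K := B * S * Bᵀ
  have hterm (T : ℝ) (hT : 0 ≤ T) (k : ℕ) :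
      ‖exp ((k * T) • A) * K * exp ((k * T) • Aᵀ)‖ ≤ M * ‖K‖ * Real.exp (-c * T) ^ k :=
    calc _ ≤ ‖exp ((k * T) • A)‖ ^ 2 * ‖K‖ := Matrix.norm_exp_mul_mul_exp_transpose_le A K _
      _ ≤ M * Real.exp (-c * (k * T)) * ‖K‖ := by gcongr; exact h _ (by positivity)
      _ = M * ‖K‖ * Real.exp (-c * T) ^ k := by rw [← Real.exp_nat_mul]; ring_nf
  have hlim (k : ℕ) : Tendsto (fun T : ℝ => exp ((k * T) • A) * K * exp ((k * T) • Aᵀ)) atTop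
      (𝓝 (if k = 0 then K else 0)) := by
    rcases Nat.eq_zero_or_pos k with rfl | hk
    · simp
    rw [if_neg hk.ne']
    have hexp : Tendsto (fun T => Real.exp (-c * T)) atTop (𝓝 0) :=
      Real.tendsto_exp_atBot.comp (tendsto_id.const_mul_atTop_of_neg (neg_neg_of_pos hc))
    refine squeeze_zero_norm' ((eventually_ge_atTop 0).mono fun T hT => hterm T hT k) ?_
    simpa [zero_pow hk.ne'] using (hexp.pow k).const_mul (M * ‖K‖)
  have hdom : ∀ᶠ T : ℝ in atTop, ∀ k : ℕ,
      ‖exp ((k * T) • A) * K * exp ((k * T) • Aᵀ)‖ ≤ M * ‖K‖ * Real.exp (-c) ^ k := by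
    filter_upwards [eventually_ge_atTop (1 : ℝ)] with T hT k
    refine (hterm T (by linarith) k).trans ?_
    gcongr
    nlinarith
  have hsum : Summable fun k : ℕ => M * ‖K‖ * Real.exp (-c) ^ k :=
    (summable_geometric_of_lt_one (Real.exp_nonneg _)
      (Real.exp_lt_one_iff.2 (neg_neg_of_pos hc))).mul_left _
  have h := tendsto_tsum_of_dominated_convergence hsum hlim hdom
  rwa [tsum_ite_eq] at h

end IsHurwitz

/-- as `T → ∞`, `f_{T,σ²}(Σ)` converges to
`(1/2)·log₂ det(I + (1/σ²) O_∞ BΣBᵀ)`, where `O_∞` is the infinite-horizon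
observability Gramian. -/
theorem stmt6 {n m p : ℕ} (A : Matrix (Fin n) (Fin n) ℝ) (B : Matrix (Fin n) (Fin m) ℝ)
    (C : Matrix (Fin p) (Fin n) ℝ) (hA : IsHurwitz A) (σ2 : ℝ) (hσ : 0 < σ2)
    (S : Matrix (Fin m) (Fin m) ℝ) (hS : S.PosSemidef) :
    Filter.Tendsto (fun T : ℝ => infoFun A B C T σ2 S) Filter.atTop
      (nhds ((1 / 2) * Real.logb 2
        ((1 : Matrix (Fin n) (Fin n) ℝ) + σ2⁻¹ •
          ((∫ t in Set.Ioi (0:ℝ),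
              NormedSpace.exp (t • Aᵀ) * (Cᵀ * C) * NormedSpace.exp (t • A)) *
            (B * S * Bᵀ))).det)) := by
  have hO := hA.tendsto_obsGram C
  have hW := hA.tendsto_ctrlGram B S
  set O := ∫ t in Set.Ioi (0 : ℝ), exp (t • Aᵀ) * (Cᵀ * C) * exp (t • A)
  set K := B * S * Bᵀ
  have hlim_pos : 0 < (1 + σ2⁻¹ • (O * K)).det := by
    rw [← smul_mul_assoc]
    refine Matrix.det_one_add_mul_pos ((Matrix.posSemidef_integral fun t => ?_).smul
      (inv_nonneg.2 hσ.le)) (by simpa using hS.mul_mul_conjTranspose_same B)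
    exact Matrix.posSemidef_exp_transpose_mul_mul_exp A C t
  have hdet (W : ℝ → Matrix (Fin n) (Fin n) ℝ) {W₀} (hW : Tendsto W atTop (𝓝 W₀)) :
      Tendsto (fun T => (σ2 • 1 + obsGram A C T * W T).det) atTop (𝓝 (σ2 • 1 + O * W₀).det) :=
    (continuous_id.matrix_det.tendsto _).comp (tendsto_const_nhds.add (hO.mul hW))
  have hratio := (hdet _ hW).div (hdet _ (hW.sub_const K)) (by simp [hσ.ne'])
  rw [sub_self, mul_zero, add_zero, Matrix.det_smul_one_add_div_det_smul_one hσ.ne'] at hratio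
  exact (hratio.logb hlim_pos.ne').const_mul (1 / 2)
end

section
/- Let P ∈ ℂ^{n×n} be a Hermitian positive definite matrix. Then for every index i, the i-th diagonal entry of P⁻¹ is a real number at least 1/P_{ii}; equivalently, the diagonal matrix formed by the diagonal entries of P⁻¹ minus the inverse of the diagonal matrix formed by the diagonal entries of P is positive semidefinite. -/
open Matrix
open scoped ComplexOrder

/-
A variational argument: for `A ≻ 0`, every vector `x` and every self-adjoint scalar `c`,
`0 ≤ (A⁻¹x - c x)ᴴ A (A⁻¹x - c x) = xᴴA⁻¹x - 2c xᴴx + c² xᴴAx`. The choice `c = xᴴx / xᴴAx`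
gives `(xᴴx)² / xᴴAx ≤ xᴴA⁻¹x`, and `x = eᵢ` gives `1 / Aᵢᵢ ≤ (A⁻¹)ᵢᵢ`.
-/

namespace Matrix

variable {n K : Type*} [Fintype n]

lemma IsHermitian.star_mulVec_dotProduct [CommSemiring K] [StarRing K] {B : Matrix n n K}
    (hB : B.IsHermitian) (x y : n → K) : star (B *ᵥ x) ⬝ᵥ y = star x ⬝ᵥ B *ᵥ y := by
  rw [star_mulVec, hB.eq, dotProduct_mulVec]

variable [DecidableEq n] [Field K]

lemma inv_diagonal_of_ne_zero {d : n → K} (hd : ∀ i, d i ≠ 0) :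
    (diagonal d)⁻¹ = diagonal fun i => (d i)⁻¹ :=
  inv_eq_right_inv <| by simp [diagonal_mul_diagonal, hd]

variable [StarRing K]

lemma IsHermitian.dotProduct_mulVec_inv_mulVec_sub_smul {A : Matrix n n K} (hA : A.IsHermitian)
    (hdet : IsUnit A.det) (x : n → K) {c : K} (hc : star c = c) :
    star (A⁻¹ *ᵥ x - c • x) ⬝ᵥ A *ᵥ (A⁻¹ *ᵥ x - c • x) =
      star x ⬝ᵥ A⁻¹ *ᵥ x - 2 * c * (star x ⬝ᵥ x) + c ^ 2 * (star x ⬝ᵥ A *ᵥ x) := by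
  have hAA : A *ᵥ (A⁻¹ *ᵥ x) = x := by rw [mulVec_mulVec, mul_nonsing_inv _ hdet, one_mulVec]
  have hAA' : A⁻¹ *ᵥ (A *ᵥ x) = x := by rw [mulVec_mulVec, nonsing_inv_mul _ hdet, one_mulVec]
  simp only [star_sub, star_smul, mulVec_sub, mulVec_smul, sub_dotProduct, dotProduct_sub,
    smul_dotProduct, dotProduct_smul, hAA, hAA', hA.inv.star_mulVec_dotProduct, hc, smul_eq_mul]
  ring

variable [PartialOrder K] [StarOrderedRing K]

theorem PosDef.sq_dotProduct_star_self_div_le {A : Matrix n n K} (hA : A.PosDef) (x : n → K) :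
    (star x ⬝ᵥ x) ^ 2 / (star x ⬝ᵥ A *ᵥ x) ≤ star x ⬝ᵥ A⁻¹ *ᵥ x := by
  set s := star x ⬝ᵥ x
  set q := star x ⬝ᵥ A *ᵥ x
  have hc : IsSelfAdjoint (s / q) :=
    (IsSelfAdjoint.of_nonneg (dotProduct_star_self_nonneg x)).div
      (IsSelfAdjoint.of_nonneg (hA.posSemidef.dotProduct_mulVec_nonneg x))
  have h := hA.posSemidef.dotProduct_mulVec_nonneg (A⁻¹ *ᵥ x - (s / q) • x)
  rw [hA.isHermitian.dotProduct_mulVec_inv_mulVec_sub_smul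
    ((isUnit_iff_isUnit_det A).1 hA.isUnit) x hc] at h
  have hq : (s / q) ^ 2 * q = s ^ 2 / q := by
    rcases eq_or_ne q 0 with h0 | h0
    · simp [h0]
    · field_simp
  rw [hq] at h
  exact sub_nonneg.1 (h.trans_eq (by ring))

theorem PosDef.inv_apply_self_le_inv_apply {A : Matrix n n K} (hA : A.PosDef) (i : n) :
    (A i i)⁻¹ ≤ A⁻¹ i i := by
  simpa [mulVec_single, single_dotProduct, ← Pi.single_star] using
    hA.sq_dotProduct_star_self_div_le (Pi.single i 1)

end Matrix

/-- for a Hermitian positive definite `P ∈ ℂ^{n×n}`, each diagonal entry of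
`P⁻¹` is (a real number) at least `1/P_{ii}`; equivalently,
`diag(P⁻¹) − (diag P)⁻¹ ⪰ 0`. -/
theorem stmt12 {n : ℕ} (P : Matrix (Fin n) (Fin n) ℂ) (hP : P.PosDef) :
    (∀ i, (P⁻¹ i i).im = 0 ∧ (P i i)⁻¹ ≤ P⁻¹ i i) ∧
    (Matrix.diagonal (fun i => P⁻¹ i i) -
      (Matrix.diagonal fun i => P i i)⁻¹).PosSemidef := by
  have hle : ∀ i, (P i i)⁻¹ ≤ P⁻¹ i i := hP.inv_apply_self_le_inv_apply
  refine ⟨fun i => ⟨(Complex.pos_iff.1 hP.inv.diag_pos).2.symm, hle i⟩, ?_⟩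
  rw [inv_diagonal_of_ne_zero fun i => hP.diag_pos.ne', diagonal_sub]
  exact posSemidef_diagonal_iff.2 fun i => sub_nonneg.2 (hle i)
end

section
/- Let P > 0, σ² > 0, and λ ∈ ℂ with Re λ < 0, and define g(T) := (1/(2T))·log₂( (P/σ² − 2·Re λ) / ((P/σ²)·e^{2T·Re λ} − 2·Re λ) ) for T > 0. Then g is monotonically decreasing on (0, ∞), and g(T) tends to (1/ln 2)·((P/σ²)·Re λ) / (2·Re λ − P/σ²) as T → 0⁺. -/
/-!
For `a > 0` and `b ≥ 0`, `x ↦ log (a eˣ + b)` is convex, its derivative `a eˣ / (a eˣ + b)`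
being increasing; hence so is `F T = log (a e^{2rT} - 2r)` for `a = P/σ²`, `r = Re λ < 0`.
Since `g T = -(slope F 0 T) / (2 log 2)`, the monotonicity of the secant slopes of a convex
function makes `g` antitone on `(0, ∞)`, and `g` tends to `-F'(0) / (2 log 2)` at `0⁺`.
-/

open Real Set Filter Topology

section LogMulExpAdd

variable {a b : ℝ}

lemma hasDerivAt_log_mul_exp_add (ha : 0 < a) (hb : 0 ≤ b) (x : ℝ) :
    HasDerivAt (fun x => log (a * exp x + b)) (a * exp x / (a * exp x + b)) x :=
  (((hasDerivAt_exp x).const_mul a).add_const b).log (by positivity : 0 < a * exp x + b).ne'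

lemma convexOn_log_mul_exp_add (ha : 0 < a) (hb : 0 ≤ b) :
    ConvexOn ℝ univ fun x => log (a * exp x + b) := by
  refine Monotone.convexOn_univ_of_deriv
    (fun x => (hasDerivAt_log_mul_exp_add ha hb x).differentiableAt) ?_
  intro x y hxy
  have hexp : exp x ≤ exp y := exp_le_exp.2 hxy
  simp only [(hasDerivAt_log_mul_exp_add ha hb _).deriv]
  rw [div_le_div_iff₀ (by positivity) (by positivity)]
  nlinarith [mul_le_mul_of_nonneg_left hexp (mul_nonneg ha.le hb)]

lemma hasDerivAt_log_mul_exp_mul_add (ha : 0 < a) (hb : 0 ≤ b) (k x : ℝ) :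
    HasDerivAt (fun x => log (a * exp (k * x) + b))
      (a * exp (k * x) / (a * exp (k * x) + b) * k) x :=
  (hasDerivAt_log_mul_exp_add ha hb (k * x)).comp x (by simpa using (hasDerivAt_id x).const_mul k)

lemma convexOn_log_mul_exp_mul_add (ha : 0 < a) (hb : 0 ≤ b) (k : ℝ) :
    ConvexOn ℝ univ fun x => log (a * exp (k * x) + b) :=
  (convexOn_log_mul_exp_add ha hb).comp_linearMap (LinearMap.mulLeft ℝ k)

end LogMulExpAdd

/-- for `P, σ² > 0` and `Re λ < 0`, the function
`g(T) = (1/(2T)) log₂((P/σ² − 2Re λ)/((P/σ²) e^{2T Re λ} − 2Re λ))` is monotonically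
decreasing on `(0,∞)` and tends to `(1/ln 2)·((P/σ²)·Re λ)/(2Re λ − P/σ²)` as `T → 0⁺`. -/
theorem stmt15 (P σ2 : ℝ) (hP : 0 < P) (hσ : 0 < σ2) (lam : ℂ) (hl : lam.re < 0) :
    AntitoneOn (fun T : ℝ => (1 / (2 * T)) * Real.logb 2
        ((P / σ2 - 2 * lam.re) /
          ((P / σ2) * Real.exp (2 * T * lam.re) - 2 * lam.re))) (Set.Ioi 0) ∧
    Filter.Tendsto (fun T : ℝ => (1 / (2 * T)) * Real.logb 2
        ((P / σ2 - 2 * lam.re) /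
          ((P / σ2) * Real.exp (2 * T * lam.re) - 2 * lam.re)))
      (nhdsWithin 0 (Set.Ioi 0))
      (nhds ((1 / Real.log 2) * ((P / σ2) * lam.re) / (2 * lam.re - P / σ2))) := by
  set a := P / σ2
  set r := lam.re
  have ha : 0 < a := div_pos hP hσ
  have hb : 0 ≤ -(2 * r) := by linarith
  set F : ℝ → ℝ := fun T => log (a * exp (2 * r * T) + -(2 * r))
  have hg_slope : ∀ T ≠ 0,
      (1 / (2 * T)) * logb 2 ((a - 2 * r) / (a * exp (2 * T * r) - 2 * r)) =
        -(1 / (2 * log 2)) * slope F 0 T := by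
    intro T hT
    have hlog2 : log 2 ≠ 0 := (log_pos one_lt_two).ne'
    have hden : 0 < a * exp (2 * T * r) - 2 * r := by have := exp_pos (2 * T * r); nlinarith
    rw [logb, log_div (by linarith) hden.ne', slope_def_field]
    simp only [F, mul_zero, exp_zero, mul_one, sub_zero, ← sub_eq_add_neg]
    rw [show 2 * r * T = 2 * T * r by ring]
    field_simp
    ring
  have hF : ConvexOn ℝ univ F := convexOn_log_mul_exp_mul_add ha hb (2 * r)
  have hF' : HasDerivAt F (2 * a * r / (a - 2 * r)) 0 := by
    convert hasDerivAt_log_mul_exp_mul_add ha hb (2 * r) 0 using 1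
    simp only [mul_zero, exp_zero, mul_one]
    ring
  have hc : -(1 / (2 * log 2)) ≤ 0 := by
    have := log_pos one_lt_two
    simp only [neg_nonpos]
    positivity
  constructor
  · intro s hs t ht hst
    simp only [hg_slope s (ne_of_gt hs), hg_slope t (ne_of_gt ht)]
    exact mul_le_mul_of_nonpos_left
      (hF.slope_mono (mem_univ 0) ⟨mem_univ s, hs.ne'⟩ ⟨mem_univ t, ht.ne'⟩ hst) hc
  · have hlim : Tendsto (fun T => -(1 / (2 * log 2)) * slope F 0 T) (𝓝[>] 0)
        (𝓝 (1 / log 2 * (a * r) / (2 * r - a))) := by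
      convert (hasDerivAt_iff_tendsto_slope_left_right.1 hF').2.const_mul _ using 2
      rw [show 2 * r - a = -(a - 2 * r) by ring]
      field_simp
    exact hlim.congr' (eventually_nhdsWithin_of_forall fun T hT => (hg_slope T (ne_of_gt hT)).symm)
end
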